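/- Let E be a directed graph on Fin n with diameter bound d ≥ 1, let v : Fin n → ℝ satisfy v j ≥ 0 for all j with the values v j not all equal, and let M, S : ℕ → Fin n → ℝ satisfy M 0 i = S 0 i = v i, M (t+1) i = max_{j ∈ N̄ i} M t j, and S (t+1) i = submax ({S t j | j ∈ N̄ i} ∪ {M t i, v i}) for all t and i. Then for all t ≥ 2 * d + 1 and all nodes i, S t i = submax {v j | j : Fin n}. -/

import Mathlib

open Finset Filter

noncomputable def fsMax (s : Finset ℝ) : ℝ := s.max.unbotD 0

noncomputable def fsMin (s : Finset ℝ) : ℝ := s.min.untopD 0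

noncomputable def fsSubmax (s : Finset ℝ) : ℝ := fsMax (s.filter (fun x => x < fsMax s))

/-- Agent `i` is dominating for task `q`. -/
def Dominating {n m : ℕ} (f : Fin n → Fin m → ℝ) (i : Fin n) (q : Fin m) : Prop :=
  ∀ j, f j q ≤ f i q

open Classical in
/-- Closed in-neighborhood of node `i`. -/
noncomputable def nbhd {n : ℕ} (E : Fin n → Fin n → Prop) (i : Fin n) : Finset (Fin n) :=
  insert i (Finset.univ.filter (fun j => E j i))

/-- `d` is a diameter bound for the directed graph `E`. -/
def IsDiamBound {n : ℕ} (E : Fin n → Fin n → Prop) (d : ℕ) : Prop :=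
  ∀ j i : Fin n, ∃ p ≤ d, ∃ c : ℕ → Fin n,
    c 0 = j ∧ c p = i ∧ ∀ k < p, E (c k) (c (k + 1))

/-!
The maximum `V₁` of the initial values floods the graph: along a path from a node holding `V₁`,
`M t i = V₁` for every `t ≥ d`. Every `S`-value is an initial value or the default `0` of
`fsSubmax`, and from time `1` on it lies strictly below `V₁`; as the values are nonnegative, this
gives `S t i ≤ V₂`, the second largest initial value.
Once `M` has settled, any value `< V₁` offered to a node is a lower bound for its next `S`-value;
hence the node holding `V₂` reaches `S = V₂` at time `d + 1`, and this value floods the graph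
in `d` more steps.
-/

theorem fsMax_empty : fsMax ∅ = 0 := by
  simp [fsMax]

theorem fsMax_eq_max' {s : Finset ℝ} (h : s.Nonempty) : fsMax s = s.max' h := by
  rw [fsMax, ← Finset.coe_max' h, WithBot.unbotD_coe]

theorem fsMax_mem {s : Finset ℝ} (h : s.Nonempty) : fsMax s ∈ s := by
  rw [fsMax_eq_max' h]
  exact s.max'_mem h

theorem le_fsMax {s : Finset ℝ} {x : ℝ} (hx : x ∈ s) : x ≤ fsMax s := by
  rw [fsMax_eq_max' ⟨x, hx⟩]
  exact s.le_max' x hx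

theorem fsMax_le {s : Finset ℝ} {b : ℝ} (hb : 0 ≤ b) (h : ∀ x ∈ s, x ≤ b) :
    fsMax s ≤ b := by
  rcases s.eq_empty_or_nonempty with rfl | hs
  · rwa [fsMax_empty]
  · exact h _ (fsMax_mem hs)

theorem exists_eq_fsMax_image {α : Type*} {u : Finset α} (hu : u.Nonempty) (f : α → ℝ) :
    ∃ j ∈ u, f j = fsMax (u.image f) :=
  mem_image.1 (fsMax_mem (hu.image f))

theorem le_fsSubmax {s : Finset ℝ} {x : ℝ} (hx : x ∈ s) (hlt : x < fsMax s) :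
    x ≤ fsSubmax s :=
  le_fsMax (mem_filter.2 ⟨hx, hlt⟩)

theorem fsSubmax_mem_insert_zero (s : Finset ℝ) : fsSubmax s ∈ insert 0 s := by
  rcases (s.filter (· < fsMax s)).eq_empty_or_nonempty with he | hne
  · rw [fsSubmax, he, fsMax_empty]
    exact mem_insert_self 0 s
  · exact mem_insert_of_mem (mem_filter.1 (fsMax_mem hne)).1

theorem fsSubmax_lt_of_pos {s : Finset ℝ} {b : ℝ} (hb : 0 < b) (h : ∀ x ∈ s, x ≤ b) :
    fsSubmax s < b := by
  rcases (s.filter (· < fsMax s)).eq_empty_or_nonempty with he | hne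
  · rwa [fsSubmax, he, fsMax_empty]
  · exact (mem_filter.1 (fsMax_mem hne)).2.trans_le (fsMax_le hb.le h)

theorem fsSubmax_mem_and_lt_fsMax {s : Finset ℝ} {x : ℝ} (hx : x ∈ s) (hlt : x < fsMax s) :
    fsSubmax s ∈ s ∧ fsSubmax s < fsMax s :=
  mem_filter.1 (fsMax_mem ⟨x, mem_filter.2 ⟨hx, hlt⟩⟩)

theorem exists_eq_fsSubmax_image_lt_fsMax {α : Type*} [Fintype α] {f : α → ℝ}
    (hf : ∃ j k, f j ≠ f k) :
    ∃ i, f i = fsSubmax (univ.image f) ∧ fsSubmax (univ.image f) < fsMax (univ.image f) := by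
  obtain ⟨j, k, hjk⟩ := hf
  have hle : ∀ i, f i ≤ fsMax (univ.image f) := fun i =>
    le_fsMax (mem_image_of_mem f (mem_univ i))
  have hbelow : ∃ i, f i < fsMax (univ.image f) := by
    rcases (hle j).lt_or_eq with hj | hj
    · exact ⟨j, hj⟩
    · exact ⟨k, (hle k).lt_of_ne (hj ▸ hjk.symm)⟩
  obtain ⟨l, hl⟩ := hbelow
  obtain ⟨hmem, hsub⟩ := fsSubmax_mem_and_lt_fsMax (mem_image_of_mem f (mem_univ l)) hl
  obtain ⟨i, -, hi⟩ := mem_image.1 hmem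
  exact ⟨i, hi, hsub⟩

section Graph

variable {n : ℕ} {E : Fin n → Fin n → Prop}

theorem mem_nbhd_self (E : Fin n → Fin n → Prop) (i : Fin n) : i ∈ nbhd E i :=
  mem_insert_self _ _

theorem mem_nbhd_of_adj {i j : Fin n} (h : E j i) : j ∈ nbhd E i := by
  simp [nbhd, h]

theorem nbhd_nonempty (E : Fin n → Fin n → Prop) (i : Fin n) : (nbhd E i).Nonempty :=
  ⟨i, mem_nbhd_self E i⟩

theorem IsDiamBound.forall_of_step {d : ℕ} (hdiam : IsDiamBound E d)
    {P : ℕ → Fin n → Prop} {t₀ : ℕ}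
    (hstep : ∀ t ≥ t₀, ∀ i, ∀ j ∈ nbhd E i, P t j → P (t + 1) i)
    {j : Fin n} (hj : P t₀ j) : ∀ t ≥ t₀ + d, ∀ i, P t i := by
  have persist : ∀ s ≥ t₀, ∀ i, P s i → ∀ t ≥ s, P t i := by
    intro s hs i hi t ht
    induction t, ht using Nat.le_induction with
    | base => exact hi
    | succ t hst ih => exact hstep t (hs.trans hst) i i (mem_nbhd_self E i) ih
  intro t ht i
  obtain ⟨p, hp, c, rfl, rfl, hc⟩ := hdiam j i
  have along : ∀ k ≤ p, P (t₀ + k) (c k) := by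
    intro k hk
    induction k with
    | zero => exact hj
    | succ k ih =>
      exact hstep (t₀ + k) (by omega) (c (k + 1)) (c k) (mem_nbhd_of_adj (hc k (by omega)))
        (ih (by omega))
  exact persist _ (by omega) _ (along p le_rfl) t (by omega)

end Graph

structure IsMaxFlood {n : ℕ} (E : Fin n → Fin n → Prop) (v : Fin n → ℝ)
    (M : ℕ → Fin n → ℝ) : Prop where
  zero : ∀ i, M 0 i = v i
  succ : ∀ t i, M (t + 1) i = fsMax ((nbhd E i).image (M t))

structure IsSubmaxFlood {n : ℕ} (E : Fin n → Fin n → Prop) (v : Fin n → ℝ)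
    (M S : ℕ → Fin n → ℝ) : Prop where
  zero : ∀ i, S 0 i = v i
  succ : ∀ t i, S (t + 1) i = fsSubmax (((nbhd E i).image (S t)) ∪ {M t i, v i})

section Flood

variable {n : ℕ} {E : Fin n → Fin n → Prop} {v : Fin n → ℝ} {M S : ℕ → Fin n → ℝ}

namespace IsMaxFlood

theorem le_succ (hM : IsMaxFlood E v M) (t : ℕ) {i j : Fin n} (hj : j ∈ nbhd E i) :
    M t j ≤ M (t + 1) i := by
  rw [hM.succ]
  exact le_fsMax (mem_image_of_mem _ hj)

theorem mem_image_univ (hM : IsMaxFlood E v M) (t : ℕ) (i : Fin n) : M t i ∈ univ.image v := by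
  induction t generalizing i with
  | zero => rw [hM.zero]; exact mem_image_of_mem v (mem_univ i)
  | succ t ih =>
    obtain ⟨j, -, hj⟩ := exists_eq_fsMax_image (nbhd_nonempty E i) (M t)
    rw [hM.succ, ← hj]
    exact ih j

theorem eq_fsMax {d : ℕ} (hM : IsMaxFlood E v M) (hdiam : IsDiamBound E d) {t : ℕ}
    (ht : d ≤ t) (i : Fin n) : M t i = fsMax (univ.image v) := by
  refine le_antisymm (le_fsMax (hM.mem_image_univ t i)) ?_
  obtain ⟨j, -, hj⟩ := exists_eq_fsMax_image ⟨i, mem_univ i⟩ v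
  refine hdiam.forall_of_step (P := fun t i => fsMax (univ.image v) ≤ M t i) (t₀ := 0)
    (fun t _ i j hj h => h.trans (hM.le_succ t hj)) (j := j) ?_ t (by omega) i
  rw [hM.zero, hj]

end IsMaxFlood

namespace IsSubmaxFlood

theorem mem_insert_zero_image_univ (hS : IsSubmaxFlood E v M S) (hM : IsMaxFlood E v M)
    (t : ℕ) (i : Fin n) : S t i ∈ insert 0 (univ.image v) := by
  induction t generalizing i with
  | zero => rw [hS.zero]; exact mem_insert_of_mem (mem_image_of_mem v (mem_univ i))
  | succ t ih =>
    rw [hS.succ]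
    refine insert_subset_iff.2 ⟨mem_insert_self _ _, ?_⟩ (fsSubmax_mem_insert_zero _)
    intro x hx
    simp only [mem_union, mem_image, mem_insert, mem_singleton] at hx
    rcases hx with ⟨j, -, rfl⟩ | rfl | rfl
    · exact ih j
    · exact mem_insert_of_mem (hM.mem_image_univ t i)
    · exact mem_insert_of_mem (mem_image_of_mem v (mem_univ i))

theorem le_fsMax (hS : IsSubmaxFlood E v M S) (hM : IsMaxFlood E v M)
    (h0 : 0 ≤ fsMax (univ.image v)) (t : ℕ) (i : Fin n) : S t i ≤ fsMax (univ.image v) := by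
  rcases mem_insert.1 (hS.mem_insert_zero_image_univ hM t i) with h | h
  · exact h ▸ h0
  · exact _root_.le_fsMax h

theorem lt_fsMax (hS : IsSubmaxFlood E v M S) (hM : IsMaxFlood E v M)
    (hpos : 0 < fsMax (univ.image v)) (t : ℕ) (i : Fin n) :
    S (t + 1) i < fsMax (univ.image v) := by
  rw [hS.succ]
  refine fsSubmax_lt_of_pos hpos fun x hx => ?_
  simp only [mem_union, mem_image, mem_insert, mem_singleton] at hx
  rcases hx with ⟨j, -, rfl⟩ | rfl | rfl
  · exact hS.le_fsMax hM hpos.le t j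
  · exact _root_.le_fsMax (hM.mem_image_univ t i)
  · exact _root_.le_fsMax (mem_image_of_mem v (mem_univ i))

theorem le_fsSubmax (hS : IsSubmaxFlood E v M S) (hM : IsMaxFlood E v M)
    (hpos : 0 < fsMax (univ.image v)) (h0 : 0 ≤ fsSubmax (univ.image v))
    {t : ℕ} (ht : 1 ≤ t) (i : Fin n) : S t i ≤ fsSubmax (univ.image v) := by
  obtain ⟨t, rfl⟩ := Nat.exists_eq_add_of_le' ht
  rcases mem_insert.1 (hS.mem_insert_zero_image_univ hM (t + 1) i) with h | h
  · exact h ▸ h0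
  · exact _root_.le_fsSubmax h (hS.lt_fsMax hM hpos t i)

theorem le_succ {d : ℕ} (hS : IsSubmaxFlood E v M S) (hM : IsMaxFlood E v M)
    (hdiam : IsDiamBound E d) {t : ℕ} (ht : d ≤ t) {i : Fin n} {x : ℝ}
    (hx : x ∈ ((nbhd E i).image (S t)) ∪ {M t i, v i}) (hlt : x < fsMax (univ.image v)) :
    x ≤ S (t + 1) i := by
  rw [hS.succ]
  refine _root_.le_fsSubmax hx (hlt.trans_le ?_)
  rw [← hM.eq_fsMax hdiam ht i]
  exact _root_.le_fsMax (mem_union_right _ (mem_insert_self _ _))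

end IsSubmaxFlood

end Flood

theorem submax_consensus_general {n : ℕ} (E : Fin n → Fin n → Prop)
    (d : ℕ) (hdiam : IsDiamBound E d)
    (v : Fin n → ℝ) (hv : ∀ j, 0 ≤ v j) (hne : ∃ j k : Fin n, v j ≠ v k)
    (M S : ℕ → Fin n → ℝ)
    (hM0 : ∀ i, M 0 i = v i) (hS0 : ∀ i, S 0 i = v i)
    (hMs : ∀ t i, M (t + 1) i = fsMax ((nbhd E i).image (M t)))
    (hSs : ∀ t i, S (t + 1) i =
      fsSubmax (((nbhd E i).image (S t)) ∪ {M t i, v i})) :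
    ∀ t, 2 * d + 1 ≤ t → ∀ i, S t i = fsSubmax (Finset.univ.image v) := by
  have hM : IsMaxFlood E v M := ⟨hM0, hMs⟩
  have hS : IsSubmaxFlood E v M S := ⟨hS0, hSs⟩
  obtain ⟨k, hk, hlt⟩ := exists_eq_fsSubmax_image_lt_fsMax hne
  have h0 : 0 ≤ fsSubmax (univ.image v) := hk ▸ hv k
  have hpos : 0 < fsMax (univ.image v) := h0.trans_lt hlt
  have hstep : ∀ t ≥ d + 1, ∀ i, ∀ j ∈ nbhd E i,
      fsSubmax (univ.image v) ≤ S t j → fsSubmax (univ.image v) ≤ S (t + 1) i := by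
    intro t ht i j hj hSj
    have hSj' : S t j = fsSubmax (univ.image v) :=
      le_antisymm (hS.le_fsSubmax hM hpos h0 (by omega) j) hSj
    exact hSj' ▸ hS.le_succ hM hdiam (by omega) (mem_union_left _ (mem_image_of_mem _ hj))
      (hSj' ▸ hlt)
  have hstart : fsSubmax (univ.image v) ≤ S (d + 1) k :=
    hk ▸ hS.le_succ hM hdiam le_rfl (mem_union_right _ (mem_insert_of_mem (mem_singleton_self _)))
      (hk ▸ hlt)
  intro t ht i
  exact le_antisymm (hS.le_fsSubmax hM hpos h0 (by omega) i)
    (hdiam.forall_of_step hstep hstart t (by omega) i)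

theorem submax_consensus {n : ℕ} (hn : 1 ≤ n) (E : Fin n → Fin n → Prop)
    (d : ℕ) (hd : 1 ≤ d) (hdiam : IsDiamBound E d)
    (v : Fin n → ℝ) (hv : ∀ j, 0 ≤ v j) (hne : ∃ j k : Fin n, v j ≠ v k)
    (M S : ℕ → Fin n → ℝ)
    (hM0 : ∀ i, M 0 i = v i) (hS0 : ∀ i, S 0 i = v i)
    (hMs : ∀ t i, M (t + 1) i = fsMax ((nbhd E i).image (M t)))
    (hSs : ∀ t i, S (t + 1) i =
      fsSubmax (((nbhd E i).image (S t)) ∪ {M t i, v i})) :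
    ∀ t, 2 * d + 1 ≤ t → ∀ i, S t i = fsSubmax (Finset.univ.image v) :=
  submax_consensus_general E d hdiam v hv hne M S hM0 hS0 hMs hSs
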